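/- arXiv:2107.11840 — 4 statements merged into one kernel-verified Lean document; each statement's English description precedes it below -/
import Mathlib

section
/- Let S = (s_i)_{i≥0} be a binary sequence and N a positive integer with N-th linear complexity L(S,N). If for some integer t > 0 one has binom(⌊N/2⌋, t) ≥ 2^{L(S,N)}, then there exists an integer k with 1 < k ≤ 2t such that S has a half peak in the aperiodic correlation measure of order k, i.e. C_k(S,N) ≥ N/2. -/
open Finset

/-- The first `N` terms of the binary sequence `s` satisfy a linear recurrence of order `L`
over `F₂`: `s (i+L) = c_{L-1} s (i+L-1) + … + c_0 s i` for `0 ≤ i < N - L`. -/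
def IsLinRecOn (s : ℕ → ZMod 2) (N L : ℕ) : Prop :=
  ∃ c : Fin L → ZMod 2, ∀ i, i + L < N → s (i + L) = ∑ j : Fin L, c j * s (i + j)

/-- The `N`th linear complexity of a binary sequence `s`: the smallest positive `L` such that
the first `N` terms satisfy a linear recurrence of order `L`, with the convention that it is `0`
when the first `N` terms all vanish. -/
noncomputable def linComplexity (s : ℕ → ZMod 2) (N : ℕ) : ℕ :=
  if ∀ i < N, s i = 0 then 0 else sInf {L | 0 < L ∧ IsLinRecOn s N L}

/-- The `N`th (aperiodic) correlation measure of order `k` of a binary sequence `s`: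
`max_{U,D} |∑_{n=0}^{U-1} (-1)^{s_{n+d₁}+…+s_{n+d_k}}|` over `U ≤ N - k + 1` and
`0 ≤ d₁ < … < d_k ≤ N - U`. -/
noncomputable def corr (s : ℕ → ZMod 2) (N k : ℕ) : ℕ :=
  sSup {m : ℕ | ∃ (U : ℕ) (d : Fin k → ℕ), U + k ≤ N + 1 ∧ StrictMono d ∧
    (∀ j, d j + U ≤ N) ∧
    m = (∑ n ∈ range U, (-1 : ℤ) ^ (∑ j : Fin k, (s (n + d j)).val)).natAbs}

/-- The periodic correlation measure of order `k` of a `T`-periodic binary sequence `s`: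
`max_D |∑_{n=0}^{T-1} (-1)^{s_{n+d₁}+…+s_{n+d_k}}|` over `0 ≤ d₁ < … < d_k < T`. -/
noncomputable def pcorr (s : ℕ → ZMod 2) (T k : ℕ) : ℕ :=
  sSup {m : ℕ | ∃ d : Fin k → ℕ, StrictMono d ∧ (∀ j, d j < T) ∧
    m = (∑ n ∈ range T, (-1 : ℤ) ^ (∑ j : Fin k, (s (n + d j)).val)).natAbs}

/-- The first `N` terms of `s` are generated by a (not necessarily linear) recurrence of
order `M`. -/
def IsMaxRecOn (s : ℕ → ZMod 2) (N M : ℕ) : Prop :=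
  ∃ f : (Fin M → ZMod 2) → ZMod 2, ∀ i, i + M < N → s (i + M) = f (fun j => s (i + j))

/-- The `N`th maximum-order complexity of a binary sequence `s`. -/
noncomputable def maxOrderComplexity (s : ℕ → ZMod 2) (N : ℕ) : ℕ :=
  sInf {M | 0 < M ∧ IsMaxRecOn s N M}

/-!
Let `m = ⌊N/2⌋` and `L = L(S,N)`. A `t`-subset `D ⊆ [0, m)` gives the vector
`(∑_{e ∈ D} s (i + e))_{i < L} ∈ F₂^L`, and there are at least `2^L` such sets. So either two
distinct sets `D₁, D₂` give the same vector, and we put `E = D₁ ∆ D₂`, or some `D` gives the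
zero vector, and we put `E = D ∆ (D + 1)`. In both cases `2 ≤ |E| ≤ 2t`. The shifted sums
`n ↦ ∑_{e ∈ E} s (n + e)` satisfy the same linear recurrence as `S`, so vanishing at the first
`L` indices forces them to vanish for all `n < N - m`. Each such `n` contributes `+1` to the
correlation sum of order `|E|` with `U = N - m ≥ N/2`.
-/

theorem Finset.sum_symmDiff_charTwo {α R : Type*} [DecidableEq α] [Ring R] [CharP R 2]
    (A B : Finset α) (f : α → R) :
    ∑ x ∈ symmDiff A B, f x = ∑ x ∈ A, f x + ∑ x ∈ B, f x := by
  have hunion : A ∪ B = symmDiff A B ∪ (A ∩ B) := (symmDiff_sup_inf A B).symm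
  have hdisj : Disjoint (symmDiff A B) (A ∩ B) := disjoint_symmDiff_inf A B
  rw [← sum_union_inter, hunion, sum_union hdisj, add_assoc, CharTwo.add_self_eq_zero, add_zero]

theorem Finset.card_symmDiff_le {α : Type*} [DecidableEq α] (A B : Finset α) :
    #(symmDiff A B) ≤ #A + #B :=
  (card_le_card symmDiff_subset_union).trans (card_union_le A B)

theorem Finset.two_le_card_symmDiff {α : Type*} [DecidableEq α] {A B : Finset α} (hAB : A ≠ B)
    (hcard : #A = #B) : 2 ≤ #(symmDiff A B) := by
  have hsplit : #(symmDiff A B) = #(A \ B) + #(B \ A) := by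
    rw [symmDiff_def, sup_eq_union, card_union_of_disjoint disjoint_sdiff_sdiff]
  have hne : (A \ B).Nonempty := by
    rw [nonempty_iff_ne_empty, Ne, sdiff_eq_empty_iff_subset]
    exact fun hsub => hAB (eq_of_subset_of_card_le hsub hcard.ge)
  have := card_sdiff_comm hcard
  have := hne.card_pos
  omega

theorem Finset.map_add_one_ne_self {D : Finset ℕ} (hD : D.Nonempty) :
    D.map (addRightEmbedding 1) ≠ D := by
  intro h
  have hsum : ∑ x ∈ D.map (addRightEmbedding 1), x = ∑ x ∈ D, x + #D := by
    simp [sum_add_distrib]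
  rw [h] at hsum
  have := hD.card_pos
  omega

theorem Finset.exists_ne_map_eq_or_map_eq_of_card_le {α β : Type*} [Fintype β] [DecidableEq β]
    (S : Finset α) (f : α → β) (b : β) (hS : Fintype.card β ≤ #S) :
    (∃ x ∈ S, ∃ y ∈ S, x ≠ y ∧ f x = f y) ∨ ∃ x ∈ S, f x = b := by
  by_cases hb : ∃ x ∈ S, f x = b
  · exact Or.inr hb
  push Not at hb
  refine Or.inl (exists_ne_map_eq_of_card_lt_of_maps_to (t := univ.erase b) ?_ ?_)
  · rw [card_erase_of_mem (mem_univ b), card_univ]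
    have := Fintype.card_pos_iff.2 ⟨b⟩
    omega
  · exact fun x hx => mem_erase.2 ⟨hb x hx, mem_univ _⟩

def shiftSum {R : Type*} [AddCommMonoid R] (s : ℕ → R) (E : Finset ℕ) (n : ℕ) : R :=
  ∑ e ∈ E, s (n + e)

theorem shiftSum_symmDiff {R : Type*} [Ring R] [CharP R 2] (s : ℕ → R) (A B : Finset ℕ)
    (n : ℕ) : shiftSum s (symmDiff A B) n = shiftSum s A n + shiftSum s B n :=
  sum_symmDiff_charTwo A B _

theorem shiftSum_map_add_one {R : Type*} [AddCommMonoid R] (s : ℕ → R) (E : Finset ℕ)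
    (n : ℕ) : shiftSum s (E.map (addRightEmbedding 1)) n = shiftSum s E (n + 1) := by
  simp only [shiftSum, sum_map, addRightEmbedding_apply]
  exact sum_congr rfl fun e _ => by rw [add_comm e, add_assoc]

theorem isLinRecOn_linComplexity (s : ℕ → ZMod 2) (N : ℕ) :
    IsLinRecOn s N (linComplexity s N) := by
  unfold linComplexity
  split_ifs with h0
  · exact ⟨Fin.elim0, fun i hi => by simpa using h0 i hi⟩
  · have hN : 0 < N := by
      by_contra! hN
      exact h0 fun i hi => absurd hi (by omega)
    exact (Nat.sInf_mem (s := {L | 0 < L ∧ IsLinRecOn s N L})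
      ⟨N, hN, 0, fun i hi => absurd hi (by omega)⟩).2

theorem IsLinRecOn.shiftSum_eq_zero {s : ℕ → ZMod 2} {N L : ℕ} (hs : IsLinRecOn s N L)
    {E : Finset ℕ} {m : ℕ} (hE : E ⊆ range m) (h0 : ∀ i < L, shiftSum s E i = 0) :
    ∀ n, n + m ≤ N → shiftSum s E n = 0 := by
  obtain ⟨c, hc⟩ := hs
  intro n
  induction n using Nat.strong_induction_on with
  | _ n ih =>
    intro hn
    rcases Nat.lt_or_ge n L with hlt | hge
    · exact h0 n hlt
    obtain ⟨i, rfl⟩ : ∃ i, n = i + L := ⟨n - L, by omega⟩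
    calc shiftSum s E (i + L)
        = ∑ e ∈ E, ∑ j : Fin L, c j * s (i + j + e) := by
          refine sum_congr rfl fun e he => ?_
          have := mem_range.1 (hE he)
          rw [add_right_comm, hc (i + e) (by omega)]
          exact sum_congr rfl fun j _ => by rw [add_right_comm]
      _ = ∑ j : Fin L, c j * shiftSum s E (i + j) := by
          rw [sum_comm]
          exact sum_congr rfl fun j _ => (mul_sum _ _ _).symm
      _ = 0 := sum_eq_zero fun j _ => by
          rw [ih (i + j) (by omega) (by omega), mul_zero]

theorem natAbs_sum_neg_one_pow_le (U : ℕ) (f : ℕ → ℕ) :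
    (∑ n ∈ range U, (-1 : ℤ) ^ f n).natAbs ≤ U := by
  have := abs_sum_le_sum_abs (fun n => (-1 : ℤ) ^ f n) (range U)
  simp only [abs_pow, abs_neg, abs_one, one_pow, sum_const, card_range, nsmul_eq_mul,
    mul_one, Int.abs_eq_natAbs] at this
  exact_mod_cast this

theorem neg_one_pow_sum_val_eq_one {ι : Type*} (A : Finset ι) (f : ι → ZMod 2)
    (h : ∑ i ∈ A, f i = 0) : (-1 : ℤ) ^ (∑ i ∈ A, (f i).val) = 1 := by
  refine Even.neg_one_pow (ZMod.natCast_eq_zero_iff_even.1 ?_)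
  simpa using h

theorem le_corr_card {s : ℕ → ZMod 2} {N U : ℕ} {E : Finset ℕ} (hE : ∀ e ∈ E, e + U ≤ N)
    (hU : U + #E ≤ N + 1) (h0 : ∀ n < U, shiftSum s E n = 0) : U ≤ corr s N #E := by
  set d := E.orderEmbOfFin rfl
  have hd : ∀ n, ∑ j, s (n + d j) = shiftSum s E n := fun n =>
    (sum_map univ d.toEmbedding (fun e => s (n + e))).symm.trans (by rw [map_orderEmbOfFin_univ, shiftSum])
  refine le_csSup ⟨N + 1, ?_⟩ ⟨U, d, hU, d.strictMono, fun j => hE _ (orderEmbOfFin_mem E rfl j), ?_⟩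
  · rintro m ⟨U', d', hU', -, -, rfl⟩
    exact (natAbs_sum_neg_one_pow_le U' _).trans (by omega)
  · rw [sum_congr rfl fun n hn =>
      neg_one_pow_sum_val_eq_one _ _ ((hd n).trans (h0 n (mem_range.1 hn)))]
    simp

theorem IsLinRecOn.exists_shiftSum_eq_zero {s : ℕ → ZMod 2} {N L m t : ℕ}
    (hs : IsLinRecOn s N L) (ht : 0 < t) (h : 2 ^ L ≤ m.choose t) :
    ∃ E ⊆ range (m + 1), 2 ≤ #E ∧ #E ≤ 2 * t ∧ ∀ n, n + m < N → shiftSum s E n = 0 := by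
  have hrange : range m ⊆ range (m + 1) := range_subset_range.2 (Nat.le_succ m)
  have hcard : Fintype.card (Fin L → ZMod 2) ≤ #(powersetCard t (range m)) := by
    simpa using h
  rcases exists_ne_map_eq_or_map_eq_of_card_le _ (fun D (i : Fin L) => shiftSum s D i) 0 hcard
    with ⟨D₁, hD₁, D₂, hD₂, hne, heq⟩ | ⟨D, hD, hzero⟩
  · rw [mem_powersetCard] at hD₁ hD₂
    have hsub : symmDiff D₁ D₂ ⊆ range m :=
      symmDiff_subset_union.trans (union_subset hD₁.1 hD₂.1)
    refine ⟨symmDiff D₁ D₂, hsub.trans hrange, two_le_card_symmDiff hne (hD₁.2.trans hD₂.2.symm),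
      (card_symmDiff_le _ _).trans (by omega), fun n hn => hs.shiftSum_eq_zero hsub ?_ n hn.le⟩
    intro i hi
    rw [shiftSum_symmDiff, congrFun heq ⟨i, hi⟩, CharTwo.add_self_eq_zero]
  · rw [mem_powersetCard] at hD
    have hzD : ∀ n, n + m ≤ N → shiftSum s D n = 0 :=
      hs.shiftSum_eq_zero hD.1 fun i hi => congrFun hzero ⟨i, hi⟩
    set D' := D.map (addRightEmbedding 1)
    have hD' : D' ⊆ range (m + 1) := by
      intro x hx
      obtain ⟨e, he, rfl⟩ := mem_map.1 hx
      simpa using mem_range.1 (hD.1 he)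
    have hne : D ≠ D' := (map_add_one_ne_self (card_pos.1 (hD.2 ▸ ht))).symm
    refine ⟨symmDiff D D', symmDiff_subset_union.trans (union_subset (hD.1.trans hrange) hD'),
      two_le_card_symmDiff hne (card_map _).symm,
      (card_symmDiff_le _ _).trans (by rw [card_map]; omega), fun n hn => ?_⟩
    rw [shiftSum_symmDiff, shiftSum_map_add_one, hzD n (by omega), hzD (n + 1) (by omega),
      add_zero]

theorem aperiodic_half_peak_general (s : ℕ → ZMod 2) (N : ℕ) (t : ℕ) (ht : 0 < t)
    (h : 2 ^ linComplexity s N ≤ (N / 2).choose t) :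
    ∃ k, 1 < k ∧ k ≤ 2 * t ∧ (N : ℝ) / 2 ≤ (corr s N k : ℝ) := by
  obtain ⟨E, hE, h2, h2t, hzero⟩ := (isLinRecOn_linComplexity s N).exists_shiftSum_eq_zero ht h
  refine ⟨#E, h2, h2t, ?_⟩
  have hcard : #E ≤ N / 2 + 1 := by simpa using card_le_card hE
  have hcorr : N - N / 2 ≤ corr s N #E :=
    le_corr_card (fun e he => by have := mem_range.1 (hE he); omega) (by omega)
      fun n hn => hzero n (by omega)
  rw [div_le_iff₀ two_pos]
  exact_mod_cast (by omega : N ≤ corr s N #E * 2)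

/-- **Aperiodic half-peak theorem.** If `C(⌊N/2⌋, t) ≥ 2^{L(S,N)}` for some `t > 0`, then `S`
has a half peak `C_k(S,N) ≥ N/2` in the aperiodic correlation measure of some order `k` with
`1 < k ≤ 2t`. -/
theorem aperiodic_half_peak (s : ℕ → ZMod 2) (N : ℕ) (hN : 0 < N) (t : ℕ) (ht : 0 < t)
    (h : 2 ^ linComplexity s N ≤ (N / 2).choose t) :
    ∃ k, 1 < k ∧ k ≤ 2 * t ∧ (N : ℝ) / 2 ≤ (corr s N k : ℝ) :=
  aperiodic_half_peak_general s N t ht h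
end

section
/- Let S be a binary sequence and N a positive integer. If the N-th maximum-order complexity satisfies M(S,N) ≤ log N − 2 (log in base 2), then S has a half peak in the aperiodic correlation measure of order 2, i.e. C_2(S,N) ≥ N/2. -/
open Finset

/-!
A recurrence of order `M` determines the sequence from any window of `M` consecutive terms.
Among the `2^M + 1` windows starting at `0, …, 2^M` two coincide, say at `i < j`, and then
`s (n + i) = s (n + j)` for all `n < N - j`. The pair of shifts `(i, j)` makes every term of the
order-2 correlation sum equal to `1`, so `C₂(S, N) ≥ N - j`, and `M ≤ log N - 2` forces
`j ≤ 2^M ≤ N / 4`.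
-/

lemma exists_lt_le_pow_window_eq {α : Type*} [Fintype α] (s : ℕ → α) (M : ℕ) :
    ∃ i j, i < j ∧ j ≤ Fintype.card α ^ M ∧ ∀ t : Fin M, s (i + t) = s (j + t) := by
  obtain ⟨a, b, hab, hwin⟩ := Fintype.exists_ne_map_eq_of_card_lt
    (fun p : Fin (Fintype.card α ^ M + 1) => fun t : Fin M => s (p + t)) (by simp)
  rcases lt_or_gt_of_ne hab with hlt | hgt
  · exact ⟨a, b, hlt, by omega, fun t => congrFun hwin t⟩
  · exact ⟨b, a, hgt, by omega, fun t => (congrFun hwin t).symm⟩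

lemma IsMaxRecOn.eq_of_window_eq {s : ℕ → ZMod 2} {N M : ℕ} (hrec : IsMaxRecOn s N M)
    {i j : ℕ} (hij : i ≤ j) (hwin : ∀ t : Fin M, s (i + t) = s (j + t)) :
    ∀ u, j + u < N → s (i + u) = s (j + u) := by
  obtain ⟨f, hf⟩ := hrec
  intro u
  induction u using Nat.strong_induction_on with
  | _ u ih =>
    intro hu
    rcases lt_or_ge u M with hlt | hge
    · exact hwin ⟨u, hlt⟩
    · obtain ⟨v, rfl⟩ : ∃ v, u = v + M := ⟨u - M, by omega⟩
      rw [← add_assoc, ← add_assoc, hf (i + v) (by omega), hf (j + v) (by omega)]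
      congr 1
      funext t
      simpa only [add_assoc] using ih (v + t) (by omega) (by omega)

lemma isMaxRecOn_maxOrderComplexity (s : ℕ → ZMod 2) (N : ℕ) :
    IsMaxRecOn s N (maxOrderComplexity s N) :=
  have hne : {M | 0 < M ∧ IsMaxRecOn s N M}.Nonempty :=
    ⟨N + 1, N.succ_pos, fun _ => 0, fun _ hi => by omega⟩
  (Nat.sInf_mem hne).2

lemma bddAbove_corr_set (s : ℕ → ZMod 2) (N k : ℕ) :
    BddAbove {m : ℕ | ∃ (U : ℕ) (d : Fin k → ℕ), U + k ≤ N + 1 ∧ StrictMono d ∧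
      (∀ j, d j + U ≤ N) ∧
      m = (∑ n ∈ range U, (-1 : ℤ) ^ (∑ j : Fin k, (s (n + d j)).val)).natAbs} := by
  refine ⟨N + 1, fun m ⟨U, d, hU, _, _, hm⟩ => ?_⟩
  have hmU : m ≤ U := by
    calc m ≤ ∑ n ∈ range U, ((-1 : ℤ) ^ (∑ j : Fin k, (s (n + d j)).val)).natAbs :=
          hm ▸ Int.natAbs_sum_le _ _
      _ = U := by simp [Int.natAbs_pow]
  omega

lemma natAbs_sum_le_corr (s : ℕ → ZMod 2) {N k U : ℕ} {d : Fin k → ℕ} (hU : U + k ≤ N + 1)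
    (hd : StrictMono d) (hdU : ∀ j, d j + U ≤ N) :
    (∑ n ∈ range U, (-1 : ℤ) ^ (∑ j : Fin k, (s (n + d j)).val)).natAbs ≤ corr s N k :=
  le_csSup (bddAbove_corr_set s N k) ⟨U, d, hU, hd, hdU, rfl⟩

lemma le_corr_two_of_shift_eq (s : ℕ → ZMod 2) {N U i j : ℕ} (hij : i < j) (hjU : j + U ≤ N)
    (hshift : ∀ n < U, s (n + i) = s (n + j)) : U ≤ corr s N 2 := by
  have hsum : ∑ n ∈ range U, (-1 : ℤ) ^ (∑ t : Fin 2, (s (n + ![i, j] t)).val) = U := by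
    rw [Finset.sum_congr rfl fun n hn => ?_, sum_const, card_range, nsmul_one]
    rw [Fin.sum_univ_two, Matrix.cons_val_zero, Matrix.cons_val_one, Matrix.cons_val_zero,
      hshift n (mem_range.mp hn)]
    exact Even.neg_one_pow ⟨_, rfl⟩
  have hd : StrictMono ![i, j] := Fin.strictMono_iff_lt_succ.mpr fun t => by
    fin_cases t; simpa using hij
  have hdU : ∀ t, ![i, j] t + U ≤ N := fun t => by fin_cases t <;> simp <;> omega
  have hle := natAbs_sum_le_corr s (by omega) hd hdU
  rwa [hsum, Int.natAbs_natCast] at hle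

lemma pow_le_of_le_logb {b N m : ℕ} (hb : 1 < b) (hm : 0 < m)
    (h : (m : ℝ) ≤ Real.logb b N) : b ^ m ≤ N := by
  have hN : 0 < N := by
    by_contra! hN
    rw [Nat.le_zero.mp hN, Nat.cast_zero, Real.logb_zero] at h
    exact absurd (Nat.cast_nonpos.mp h) hm.ne'
  rw [Real.le_logb_iff_rpow_le (by exact_mod_cast hb) (by exact_mod_cast hN),
    Real.rpow_natCast] at h
  exact_mod_cast h

theorem maxOrderComplexity_half_peak_general (s : ℕ → ZMod 2) (N : ℕ)
    (h : (maxOrderComplexity s N : ℝ) ≤ Real.logb 2 N - 2) :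
    (N : ℝ) / 2 ≤ (corr s N 2 : ℝ) := by
  set M := maxOrderComplexity s N
  have hrec := isMaxRecOn_maxOrderComplexity s N
  have hpow : 2 ^ (M + 2) ≤ N := pow_le_of_le_logb one_lt_two (by omega) (by push_cast; linarith)
  obtain ⟨i, j, hij, hj, hwin⟩ := exists_lt_le_pow_window_eq s M
  rw [ZMod.card] at hj
  have hjN : 2 * j ≤ N := by rw [pow_add] at hpow; omega
  have hcorr : N - j ≤ corr s N 2 :=
    le_corr_two_of_shift_eq s hij (by omega) fun n hn => by
      simpa only [add_comm] using hrec.eq_of_window_eq hij.le hwin n (by omega)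
  rw [div_le_iff₀ two_pos]
  exact_mod_cast (by omega : N ≤ corr s N 2 * 2)

/-- **Maximum-order complexity and order-2 correlation.** If `M(S,N) ≤ log N - 2` (base-2
logarithm), then `S` has a half peak in the aperiodic correlation measure of order 2. -/
theorem maxOrderComplexity_half_peak (s : ℕ → ZMod 2) (N : ℕ) (hN : 0 < N)
    (h : (maxOrderComplexity s N : ℝ) ≤ Real.logb 2 N - 2) :
    (N : ℝ) / 2 ≤ (corr s N 2 : ℝ) :=
  maxOrderComplexity_half_peak_general s N h
end

section
/- Let S = (s_i)_{i≥0} and S' = (s'_i)_{i≥0} be binary sequences, N a positive integer, and m a nonnegative integer such that s'_i = s_i for all but at most m indices i with 0 ≤ i < N. Then C_2(S',N) ≤ C_2(S,N) + 4m. -/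
open Finset

/-! Changing `s` at one index `i < N` changes only the terms `n = i - d j` of a correlation sum,
at most `k` of them, and each term is a sign, so it moves by at most `2`. Hence every correlation
sum of `s'` is within `2 k m` of the corresponding sum of `s`. -/

def corrTerm {k : ℕ} (s : ℕ → ZMod 2) (d : Fin k → ℕ) (n : ℕ) : ℤ :=
  (-1) ^ (∑ j, (s (n + d j)).val)

def corrSum {k : ℕ} (s : ℕ → ZMod 2) (U : ℕ) (d : Fin k → ℕ) : ℤ :=
  ∑ n ∈ range U, corrTerm s d n

section Corr

variable {s : ℕ → ZMod 2} {N k U : ℕ} {d : Fin k → ℕ}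

lemma natAbs_corrSum_le : (corrSum s U d).natAbs ≤ U := by
  refine (Int.natAbs_sum_le _ _).trans ?_
  simp [corrTerm, Int.natAbs_pow]

lemma le_corr (hU : U + k ≤ N + 1) (hd : StrictMono d) (hdU : ∀ j, d j + U ≤ N) :
    (corrSum s U d).natAbs ≤ corr s N k :=
  le_csSup ⟨N + 1, by rintro _ ⟨U, d, hU, -, -, rfl⟩; exact natAbs_corrSum_le.trans (by omega)⟩
    ⟨U, d, hU, hd, hdU, rfl⟩

lemma corr_le {a : ℕ}
    (h : ∀ U (d : Fin k → ℕ), U + k ≤ N + 1 → StrictMono d → (∀ j, d j + U ≤ N) →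
      (corrSum s U d).natAbs ≤ a) :
    corr s N k ≤ a :=
  csSup_le' <| by rintro _ ⟨U, d, hU, hd, hdU, rfl⟩; exact h U d hU hd hdU

end Corr

lemma abs_sum_le_abs_sum_add_mul_card_ne {ι : Type*} [DecidableEq ι] (t : Finset ι)
    (f g : ι → ℤ) {c : ℤ} (hc : ∀ i ∈ t, |g i - f i| ≤ c) :
    |∑ i ∈ t, g i| ≤ |∑ i ∈ t, f i| + c * #{i ∈ t | g i ≠ f i} := by
  have hsplit : ∑ i ∈ t, g i = ∑ i ∈ t, f i + ∑ i ∈ t with g i ≠ f i, (g i - f i) := by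
    rw [sum_filter_of_ne (fun i _ h => sub_ne_zero.mp h), sum_sub_distrib, add_sub_cancel]
  have hdiff : |∑ i ∈ t with g i ≠ f i, (g i - f i)| ≤ c * #{i ∈ t | g i ≠ f i} :=
    calc |∑ i ∈ t with g i ≠ f i, (g i - f i)|
        ≤ ∑ i ∈ t with g i ≠ f i, |g i - f i| := abs_sum_le_sum_abs _ _
      _ ≤ #{i ∈ t | g i ≠ f i} • c := sum_le_card_nsmul _ _ _ fun i hi => hc i (mem_filter.1 hi).1
      _ = c * #{i ∈ t | g i ≠ f i} := by rw [nsmul_eq_mul, mul_comm]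
  rw [hsplit]
  exact (abs_add_le _ _).trans (add_le_add_right hdiff _)

section Perturb

variable {s s' : ℕ → ZMod 2} {N k U : ℕ} {d : Fin k → ℕ}

lemma abs_corrTerm_sub_le (n : ℕ) : |corrTerm s' d n - corrTerm s d n| ≤ 2 :=
  (abs_sub _ _).trans (by norm_num [corrTerm, abs_pow])

lemma card_shift_ne_le {e : ℕ} (he : e + U ≤ N) :
    #{n ∈ range U | s' (n + e) ≠ s (n + e)} ≤ #{i ∈ range N | s' i ≠ s i} :=
  card_le_card_of_injOn (· + e)
    (fun n hn => by
      obtain ⟨hnU, hne⟩ := mem_filter.1 hn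
      exact mem_filter.2 ⟨mem_range.2 (by rw [mem_range] at hnU; dsimp only; omega), hne⟩)
    (fun _ _ _ _ h => by simpa using h)

lemma card_corrTerm_ne_le (hdU : ∀ j, d j + U ≤ N) :
    #{n ∈ range U | corrTerm s' d n ≠ corrTerm s d n} ≤ k * #{i ∈ range N | s' i ≠ s i} := by
  have hsub : {n ∈ range U | corrTerm s' d n ≠ corrTerm s d n} ⊆
      univ.biUnion fun j => {n ∈ range U | s' (n + d j) ≠ s (n + d j)} := by
    intro n hn
    obtain ⟨hnU, hne⟩ := mem_filter.1 hn
    obtain ⟨j, hj⟩ : ∃ j, s' (n + d j) ≠ s (n + d j) := by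
      by_contra! hall
      exact hne (by simp only [corrTerm, hall])
    exact mem_biUnion.2 ⟨j, mem_univ _, mem_filter.2 ⟨hnU, hj⟩⟩
  calc _ ≤ _ := card_le_card hsub
    _ ≤ #(univ : Finset (Fin k)) * #{i ∈ range N | s' i ≠ s i} :=
      card_biUnion_le_card_mul _ _ _ fun j _ => card_shift_ne_le (hdU j)
    _ = _ := by rw [card_univ, Fintype.card_fin]

lemma natAbs_corrSum_le_add (hdU : ∀ j, d j + U ≤ N) :
    (corrSum s' U d).natAbs ≤ (corrSum s U d).natAbs + 2 * k * #{i ∈ range N | s' i ≠ s i} := by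
  have hclose : |corrSum s' U d| ≤
      |corrSum s U d| + 2 * #{n ∈ range U | corrTerm s' d n ≠ corrTerm s d n} :=
    abs_sum_le_abs_sum_add_mul_card_ne _ _ _ fun n _ => abs_corrTerm_sub_le n
  have hcard := card_corrTerm_ne_le (s := s) (s' := s') hdU
  zify at hcard ⊢
  linarith

end Perturb

theorem corr_le_corr_add_of_card_ne_le {s s' : ℕ → ZMod 2} {N m : ℕ} (k : ℕ)
    (h : #{i ∈ range N | s' i ≠ s i} ≤ m) :
    corr s' N k ≤ corr s N k + 2 * k * m :=
  corr_le fun U d hU hd hdU =>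
    (natAbs_corrSum_le_add hdU).trans <| add_le_add (le_corr hU hd hdU) (by gcongr)

theorem corr_two_stability_general (s s' : ℕ → ZMod 2) (N : ℕ) (m : ℕ)
    (h : #{i ∈ range N | s' i ≠ s i} ≤ m) :
    corr s' N 2 ≤ corr s N 2 + 4 * m :=
  corr_le_corr_add_of_card_ne_le 2 h

/-- **Stability of the order-2 correlation measure.** If `s'` differs from `s` in at most `m`
of the indices `0 ≤ i < N`, then `C₂(S',N) ≤ C₂(S,N) + 4m`. -/
theorem corr_two_stability (s s' : ℕ → ZMod 2) (N : ℕ) (hN : 0 < N) (m : ℕ)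
    (h : #{i ∈ range N | s' i ≠ s i} ≤ m) :
    corr s' N 2 ≤ corr s N 2 + 4 * m :=
  corr_two_stability_general s s' N m h
end

section
/- Let ℓ ≥ 4 be an even integer and S a (2^ℓ − 1)-periodic binary sequence whose linear complexity is at most 3ℓ/2 (as is the case for sequences from the small Kasami family). Then there exists an integer k with 1 < k ≤ 5 such that S has a full peak in the periodic correlation measure of order k, i.e. θ_k(S) = 2^ℓ − 1. -/
open Finset

/-!
A recurrence of order `L ≤ 3ℓ/2` holding on the first `2T` terms (`T = 2^ℓ - 1`) holds on the
whole `T`-periodic sequence, and so does every shift sum `n ↦ ∑_{a ∈ A} s (n + a)`. There are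
`(T choose 2) > 2^L` two-element sets `A ⊆ [0, T)`, so two distinct ones, `A` and `B`, have shift
sums with the same first `L` terms, hence equal shift sums. Over `F₂` the shift sum over `A ∆ B`,
a set of two or four shifts, then vanishes identically, so every term of the correlation sum of
that order is `1`.
-/

open scoped symmDiff

namespace Finset

variable {α : Type*} [DecidableEq α]

theorem sum_symmDiff_eq_add {R : Type*} [Semiring R] [CharP R 2] (A B : Finset α) (f : α → R) :
    ∑ x ∈ A ∆ B, f x = ∑ x ∈ A, f x + ∑ x ∈ B, f x := by
  have hsymm : ∑ x ∈ A ∆ B, f x + ∑ x ∈ A ∩ B, f x = ∑ x ∈ A ∪ B, f x := by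
    rw [symmDiff_eq_sup_sdiff_inf]
    exact sum_sdiff inter_subset_union
  rw [← sum_union_inter, ← hsymm, add_assoc, CharTwo.add_self_eq_zero, add_zero]

theorem two_le_card_symmDiff_s14 {A B : Finset α} (hcard : #A = #B) (hne : A ≠ B) :
    2 ≤ #(A ∆ B) := by
  have hdisj : #(A ∆ B) = #(A \ B) + #(B \ A) := card_union_of_disjoint disjoint_sdiff_sdiff
  have hpos : 0 < #(A \ B) + #(B \ A) := hdisj ▸ card_pos.2 (symmDiff_nonempty.2 hne)
  have := card_sdiff_comm hcard
  omega

theorem card_symmDiff_le_s14 (A B : Finset α) : #(A ∆ B) ≤ #A + #B :=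
  (card_le_card symmDiff_subset_union).trans (card_union_le A B)

end Finset

namespace LinearRecurrence

variable {R : Type*} [CommSemiring R] {E : LinearRecurrence R} {u : ℕ → R}

theorem IsSolution.sum_shift (hu : E.IsSolution u) (A : Finset ℕ) :
    E.IsSolution fun n => ∑ a ∈ A, u (n + a) := by
  intro n
  simp only [mul_sum]
  rw [sum_comm]
  refine sum_congr rfl fun a _ => ?_
  rw [show n + E.order + a = n + a + E.order by ring, hu]
  exact sum_congr rfl fun i _ => by rw [add_right_comm]

theorem IsSolution.eq_zero_of_forall_lt_order (hu : E.IsSolution u)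
    (h : ∀ n < E.order, u n = 0) : u = 0 :=
  (E.eq_iff_eqOn_range_order u 0 hu E.solSpace.zero_mem).2 fun n hn => h n (mem_range.1 hn)

theorem IsSolution.exists_sum_shift_eq_zero {E : LinearRecurrence (ZMod 2)} {s : ℕ → ZMod 2}
    (hs : E.IsSolution s) {T k : ℕ} (hcard : 2 ^ E.order < T.choose k) :
    ∃ D ⊆ range T, 2 ≤ #D ∧ #D ≤ 2 * k ∧ ∀ n, ∑ d ∈ D, s (n + d) = 0 := by
  have hlt : #(univ : Finset (Fin E.order → ZMod 2)) < #(powersetCard k (range T)) := by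
    simpa using hcard
  obtain ⟨A, hA, B, hB, hne, hinit⟩ := exists_ne_map_eq_of_card_lt_of_maps_to hlt
    (f := fun A (j : Fin E.order) => ∑ a ∈ A, s (j + a)) fun _ _ => mem_univ _
  rw [mem_powersetCard] at hA hB
  refine ⟨A ∆ B, symmDiff_subset_union.trans (union_subset hA.1 hB.1),
    two_le_card_symmDiff_s14 (hA.2.trans hB.2.symm) hne,
    (card_symmDiff_le_s14 A B).trans (by omega), fun n => ?_⟩
  have hzero := (hs.sum_shift (A ∆ B)).eq_zero_of_forall_lt_order fun j hj => by
    rw [sum_symmDiff_eq_add, congrFun hinit ⟨j, hj⟩, CharTwo.add_self_eq_zero]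
  exact congrFun hzero n

end LinearRecurrence

theorem exists_isLinRecOn_of_linComplexity_le {s : ℕ → ZMod 2} {N M : ℕ}
    (h : linComplexity s N ≤ M) : ∃ L ≤ M, IsLinRecOn s N L := by
  unfold linComplexity at h
  split_ifs at h with hzero
  · exact ⟨0, Nat.zero_le M, fun _ => 0, fun i hi => by simpa using hzero i (by omega)⟩
  · have hN : 0 < N := by
      by_contra! hN
      exact hzero fun i hi => absurd hi (by omega)
    have hne : {L | 0 < L ∧ IsLinRecOn s N L}.Nonempty :=
      ⟨N, hN, fun _ => 0, fun i hi => absurd hi (by omega)⟩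
    exact ⟨_, h, (Nat.sInf_mem hne).2⟩

theorem IsLinRecOn.exists_isSolution_of_periodic {s : ℕ → ZMod 2} {N L T : ℕ}
    (h : IsLinRecOn s N L) (hper : Function.Periodic s T) (hT : 0 < T) (hTN : T + L ≤ N) :
    ∃ E : LinearRecurrence (ZMod 2), E.order = L ∧ E.IsSolution s := by
  obtain ⟨c, hc⟩ := h
  refine ⟨⟨L, c⟩, rfl, fun i => ?_⟩
  have hmod : ∀ j, s (i + j) = s (i % T + j) := fun j => by
    rw [← hper.map_mod_nat (i + j), ← hper.map_mod_nat (i % T + j), Nat.mod_add_mod]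
  simp only [hmod]
  exact hc _ (by have := Nat.mod_lt i hT; omega)

theorem pcorr_eq_of_sum_shift_eq_zero {s : ℕ → ZMod 2} {T : ℕ} {D : Finset ℕ}
    (hD : D ⊆ range T) (h : ∀ n, ∑ d ∈ D, s (n + d) = 0) : pcorr s T #D = T := by
  set d := D.orderEmbOfFin rfl
  have hterm : ∀ n, (-1 : ℤ) ^ (∑ j, (s (n + d j)).val) = 1 := fun n => by
    refine Even.neg_one_pow ((ZMod.natCast_eq_zero_iff_even).1 ?_)
    push_cast [ZMod.natCast_val, ZMod.cast_id]
    rw [← h n, ← congrArg (fun t => ∑ x ∈ t, s (n + x)) (D.map_orderEmbOfFin_univ rfl), sum_map]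
    rfl
  refine IsGreatest.csSup_eq
    ⟨⟨d, d.strictMono, fun j => mem_range.1 (hD (D.orderEmbOfFin_mem rfl j)), by simp [hterm]⟩, ?_⟩
  rintro _ ⟨e, -, -, rfl⟩
  calc (∑ n ∈ range T, (-1 : ℤ) ^ (∑ j, (s (n + e j)).val)).natAbs
      ≤ ∑ n ∈ range T, ((-1 : ℤ) ^ (∑ j, (s (n + e j)).val)).natAbs := Int.natAbs_sum_le _ _
    _ = T := by simp

theorem two_pow_lt_choose_two {ℓ : ℕ} (hℓ : 4 ≤ ℓ) : 2 ^ (3 * ℓ / 2) < (2 ^ ℓ - 1).choose 2 := by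
  have hexp : 2 ^ (3 * ℓ / 2) * 4 ≤ 2 ^ ℓ * 2 ^ ℓ := by
    rw [← pow_add, show 4 = 2 ^ 2 by rfl, ← pow_add]
    exact Nat.pow_le_pow_right two_pos (by omega)
  obtain ⟨y, hy⟩ : ∃ y, 2 ^ ℓ = 4 * y :=
    ⟨2 ^ (ℓ - 2), by rw [← pow_sub_mul_pow 2 (by omega : 2 ≤ ℓ)]; ring⟩
  have hy4 : 4 ≤ y := by
    have : 2 ^ 4 ≤ 2 ^ ℓ := Nat.pow_le_pow_right two_pos hℓ
    omega
  have hchoose : (4 * y - 1).choose 2 = (4 * y - 1) * (2 * y - 1) := by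
    rw [Nat.choose_two_right, show 4 * y - 1 - 1 = 2 * (2 * y - 1) by omega, mul_left_comm,
      Nat.mul_div_cancel_left _ two_pos]
  rw [hy] at hexp ⊢
  rw [hchoose]
  obtain ⟨z, rfl⟩ : ∃ z, y = z + 1 := ⟨y - 1, by omega⟩
  rw [show 4 * (z + 1) - 1 = 4 * z + 3 by omega, show 2 * (z + 1) - 1 = 2 * z + 1 by omega]
  nlinarith

theorem small_kasami_peak_general (ℓ : ℕ) (hℓ : 4 ≤ ℓ) (s : ℕ → ZMod 2)
    (hper : ∀ i, s (i + (2 ^ ℓ - 1)) = s i)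
    (hL : linComplexity s (2 * (2 ^ ℓ - 1)) ≤ 3 * ℓ / 2) :
    ∃ k, 1 < k ∧ k ≤ 5 ∧ pcorr s (2 ^ ℓ - 1) k = 2 ^ ℓ - 1 := by
  obtain ⟨L, hLle, hrec⟩ := exists_isLinRecOn_of_linComplexity_le hL
  have hcount : 2 ^ L < (2 ^ ℓ - 1).choose 2 :=
    (Nat.pow_le_pow_right two_pos hLle).trans_lt (two_pow_lt_choose_two hℓ)
  have hLT : L < 2 ^ ℓ - 1 :=
    (Nat.pow_lt_pow_iff_right (by norm_num)).1 (hcount.trans_le (Nat.choose_le_two_pow _ _))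
  obtain ⟨E, rfl, hE⟩ := hrec.exists_isSolution_of_periodic hper (by omega) (by omega)
  obtain ⟨D, hDT, hD2, hD4, hD0⟩ := hE.exists_sum_shift_eq_zero hcount
  exact ⟨#D, hD2, by omega, pcorr_eq_of_sum_shift_eq_zero hDT hD0⟩

/-- **Small Kasami family.** For even `ℓ ≥ 4`, a `(2^ℓ - 1)`-periodic binary sequence with
linear complexity at most `3ℓ/2` has a full peak in the periodic correlation measure of some
order `k` with `1 < k ≤ 5`. -/
theorem small_kasami_peak (ℓ : ℕ) (hℓ : 4 ≤ ℓ) (heven : Even ℓ) (s : ℕ → ZMod 2)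
    (hper : ∀ i, s (i + (2 ^ ℓ - 1)) = s i)
    (hL : linComplexity s (2 * (2 ^ ℓ - 1)) ≤ 3 * ℓ / 2) :
    ∃ k, 1 < k ∧ k ≤ 5 ∧ pcorr s (2 ^ ℓ - 1) k = 2 ^ ℓ - 1 :=
  small_kasami_peak_general ℓ hℓ s hper hL
end
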